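/- The integral curves of the vector field k = ∂_r are geodesics (up to reparametrization) of the metric g = (1/(s²y²cos²(r/2)))·( (3/2)(dx²+dy²) + (dx + y³du)(y dr + (1/3)y³cos r du + (2 + (7/3)cos r)dx + 2 sin r dy) ); i.e. ∇_k k is proportional to k at every point. -/

import Mathlib

noncomputable section

/-- Components of the 1-form α = dx + y³ du in coordinates (x,y,u,r). -/
def alphaForm (y : ℝ) : Fin 4 → ℝ := ![1, 0, y ^ 3, 0]

/-- Components of the 1-form β = (2 + (7/3)cos r) dx + 2 sin r dy + (1/3) y³ cos r du + y dr. -/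
def betaForm (y r : ℝ) : Fin 4 → ℝ :=
  ![2 + (7 / 3) * Real.cos r, 2 * Real.sin r, (1 / 3) * y ^ 3 * Real.cos r, y]

/-- The metric g of Nurowski's formula (1), as a matrix-valued function of the point
v = (x,y,u,r) ∈ ℝ⁴. -/
def gF (s : ℝ) (v : Fin 4 → ℝ) : Matrix (Fin 4) (Fin 4) ℝ := fun i j =>
  (1 / (s ^ 2 * (v 1) ^ 2 * (Real.cos (v 3 / 2)) ^ 2)) *
    ((3 / 2) * ((if i = 0 then (1 : ℝ) else 0) * (if j = 0 then (1 : ℝ) else 0)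
              + (if i = 1 then (1 : ℝ) else 0) * (if j = 1 then (1 : ℝ) else 0))
      + (alphaForm (v 1) i * betaForm (v 1) (v 3) j
          + alphaForm (v 1) j * betaForm (v 1) (v 3) i) / 2)

/-- Partial derivative of a real function on ℝ⁴ in the k-th coordinate direction. -/
def pd (F : (Fin 4 → ℝ) → ℝ) (v : Fin 4 → ℝ) (k : Fin 4) : ℝ :=
  fderiv ℝ F v (Pi.single k 1)

/-- The inverse metric. -/
def gInv (s : ℝ) (v : Fin 4 → ℝ) : Matrix (Fin 4) (Fin 4) ℝ := (gF s v)⁻¹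

/-- Christoffel symbols Γ^l_{ij} of the Levi-Civita connection of g. -/
def Gamma (s : ℝ) (v : Fin 4 → ℝ) (l i j : Fin 4) : ℝ :=
  (1 / 2) * ∑ m, gInv s v l m *
    (pd (fun w => gF s w m j) v i + pd (fun w => gF s w m i) v j
      - pd (fun w => gF s w i j) v m)

/-- Ricci tensor R_{ij} = ∂_k Γ^k_{ij} − ∂_j Γ^k_{ik} + Γ^k_{kl}Γ^l_{ij} − Γ^k_{jl}Γ^l_{ik}. -/
def RicciT (s : ℝ) (v : Fin 4 → ℝ) (i j : Fin 4) : ℝ :=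
  (∑ k, pd (fun w => Gamma s w k i j) v k) - (∑ k, pd (fun w => Gamma s w k i k) v j)
    + (∑ k, ∑ l, Gamma s v k k l * Gamma s v l i j)
    - (∑ k, ∑ l, Gamma s v k j l * Gamma s v l i k)

/-!
The vector field `∂_r` is null, `g_rr = 0`, and since `α` has no `dr`-component, the column
`g_{m r} = α_m y / 2 · 1/(s² y² cos²(r/2))` depends on `r` only through the conformal factor,
whence `∂_r g_{m r} = tan(r/2) g_{m r}`. Therefore
`Γ^l_{rr} = ½ g^{lm} (2 ∂_r g_{mr} - ∂_m g_{rr}) = tan(r/2) δ^l_r`,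
where `g` is invertible because `det g = -9 / (16 s⁸ cos⁸(r/2))`.
-/

theorem Gamma_self_self_eq {s c : ℝ} {v : Fin 4 → ℝ} {k : Fin 4} (hg : IsUnit (gF s v).det)
    (hkk : ∀ m, pd (fun w => gF s w k k) v m = 0)
    (hk : ∀ m, pd (fun w => gF s w m k) v k = c * gF s v m k) (l : Fin 4) :
    Gamma s v l k k = c * if l = k then 1 else 0 := by
  have hinv : ∑ m, gInv s v l m * gF s v m k = if l = k then 1 else 0 := by
    rw [← Matrix.mul_apply, gInv, Matrix.nonsing_inv_mul _ hg, Matrix.one_apply]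
  calc Gamma s v l k k = c * ∑ m, gInv s v l m * gF s v m k := by
        simp only [Gamma, hk, hkk, Finset.mul_sum]
        exact Finset.sum_congr rfl fun m _ => by ring
    _ = c * if l = k then 1 else 0 := by rw [hinv]

theorem pd_apply_mul_apply_of_ne {f h : ℝ → ℝ} {h' : ℝ} {v : Fin 4 → ℝ} {i j : Fin 4}
    (hij : i ≠ j) (hf : DifferentiableAt ℝ f (v i)) (hh : HasDerivAt h h' (v j)) :
    pd (fun w => f (w i) * h (w j)) v j = f (v i) * h' := by
  have hfh : HasFDerivAt (fun w : Fin 4 → ℝ => f (w i) * h (w j)) _ v :=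
    (hf.hasDerivAt.comp_hasFDerivAt v
        (hasFDerivAt_apply (𝕜 := ℝ) (F' := fun _ => ℝ) i v)).fun_mul
      (hh.comp_hasFDerivAt v (hasFDerivAt_apply (𝕜 := ℝ) (F' := fun _ => ℝ) j v))
  rw [pd, hfh.fderiv]
  simp [hij]

theorem hasDerivAt_inv_cos_half_sq {r : ℝ} (hc : Real.cos (r / 2) ≠ 0) :
    HasDerivAt (fun r => (Real.cos (r / 2) ^ 2)⁻¹)
      (Real.tan (r / 2) * (Real.cos (r / 2) ^ 2)⁻¹) r := by
  refine ((((hasDerivAt_id' r).div_const 2).cos.fun_pow 2).fun_inv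
    (pow_ne_zero 2 hc)).congr_deriv ?_
  rw [Real.tan_eq_sin_div_cos]
  field_simp
  ring

theorem gF_apply_three (s : ℝ) (w : Fin 4 → ℝ) (m : Fin 4) :
    gF s w m 3 =
      alphaForm (w 1) m * w 1 / (2 * s ^ 2 * w 1 ^ 2) * (Real.cos (w 3 / 2) ^ 2)⁻¹ := by
  fin_cases m <;> simp [gF, alphaForm, betaForm] <;> ring

theorem gF_three_three (s : ℝ) (w : Fin 4 → ℝ) : gF s w 3 3 = 0 := by
  simp [gF_apply_three, alphaForm]

theorem pd_gF_apply_three {s : ℝ} {v : Fin 4 → ℝ} (hs : s ≠ 0) (hy : v 1 ≠ 0)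
    (hc : Real.cos (v 3 / 2) ≠ 0) (m : Fin 4) :
    pd (fun w => gF s w m 3) v 3 = Real.tan (v 3 / 2) * gF s v m 3 := by
  have hα : DifferentiableAt ℝ (fun y => alphaForm y m * y / (2 * s ^ 2 * y ^ 2)) (v 1) := by
    have : DifferentiableAt ℝ (fun y => alphaForm y m) (v 1) := by
      fin_cases m <;> simp [alphaForm]
    exact (this.mul differentiableAt_id).div (by fun_prop) (by positivity)
  simp only [gF_apply_three]
  rw [pd_apply_mul_apply_of_ne (by decide) hα (hasDerivAt_inv_cos_half_sq hc)]
  ring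

theorem gF_eq_smul (s : ℝ) (v : Fin 4 → ℝ) :
    gF s v = (1 / (s ^ 2 * v 1 ^ 2 * Real.cos (v 3 / 2) ^ 2)) •
      !![7/2 + 7/3 * Real.cos (v 3), Real.sin (v 3), v 1 ^ 3 * (1 + 4/3 * Real.cos (v 3)), v 1 / 2;
         Real.sin (v 3), 3/2, v 1 ^ 3 * Real.sin (v 3), 0;
         v 1 ^ 3 * (1 + 4/3 * Real.cos (v 3)), v 1 ^ 3 * Real.sin (v 3),
           v 1 ^ 6 * Real.cos (v 3) / 3, v 1 ^ 4 / 2;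
         v 1 / 2, 0, v 1 ^ 4 / 2, 0] := by
  ext i j
  fin_cases i <;> fin_cases j <;>
    simp [gF, alphaForm, betaForm, -mul_eq_mul_left_iff] <;> ring

theorem det_gF (s : ℝ) (v : Fin 4 → ℝ) :
    (gF s v).det = -(9 / 16) * (s ^ 2 * v 1 ^ 2 * Real.cos (v 3 / 2) ^ 2)⁻¹ ^ 4 * v 1 ^ 8 := by
  rw [gF_eq_smul, Matrix.det_smul, Matrix.det_succ_row_zero]
  simp [Fin.sum_univ_succ, Matrix.det_fin_three, Fin.succAbove]
  ring

theorem cos_half_ne_zero_of_abs_lt_pi {r : ℝ} (hr : |r| < Real.pi) : Real.cos (r / 2) ≠ 0 := by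
  obtain ⟨hl, hu⟩ := abs_lt.mp hr
  exact (Real.cos_pos_of_mem_Ioo ⟨by linarith, by linarith⟩).ne'

/-- The integral curves of k = ∂_r are (unparametrized) geodesics of the metric g:
(∇_k k)^l = Γ^l_{33} is proportional to k^l = δ^l_3 at every point of the domain. -/
theorem k_geodesic_up_to_reparametrization (s : ℝ) (hs : s ≠ 0) (v : Fin 4 → ℝ)
    (hy : v 1 ≠ 0) (hr : |v 3| < Real.pi) :
    ∃ c : ℝ, ∀ l : Fin 4, Gamma s v l 3 3 = c * (if l = 3 then 1 else 0) := by
  have hc := cos_half_ne_zero_of_abs_lt_pi hr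
  have hg : IsUnit (gF s v).det := by
    rw [det_gF]
    exact (mul_ne_zero (mul_ne_zero (by norm_num) (by positivity)) (pow_ne_zero 8 hy)).isUnit
  refine ⟨Real.tan (v 3 / 2), Gamma_self_self_eq hg (fun m => ?_) (pd_gF_apply_three hs hy hc)⟩
  simp [gF_three_three, pd]
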